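/- arXiv:2301.03371 — 4 statements merged into one kernel-verified Lean document; each statement's English description precedes it below -/
import Mathlib

section
/- Let p > 0 and a ≥ 0 be real numbers. Then for every real t with |t| ≤ 1/4, exp(−t(p + a)) · exp(a·t/(1 − 2t)) / (1 − 2t)^{p/2} ≤ exp(2(p + 2a)·t²). Consequently, any random variable X whose moment generating function equals E[exp(tX)] = exp(a·t/(1 − 2t))/(1 − 2t)^{p/2} for t < 1/2 (i.e. a non-central chi-squared random variable with p degrees of freedom and non-centrality parameter a, which has mean p + a) satisfies E[exp(t(X − (p + a)))] ≤ exp(2(p + 2a)t²) for all |t| ≤ 1/4. -/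
/-!
With `y = 1 - 2t ∈ [1/2, 3/2]`, the logarithm of the left-hand side is
`-t(p + a) + a t / y - (p/2) log y`. The non-centrality term is controlled by
`t / y - t = 2t² / y ≤ 4t²`, and the degrees-of-freedom term by the second-order bound
`log (1 - x) ≥ -x - x²` for `|x| ≤ 1/2`. The statement about `X` is the same inequality,
since shifting `X` by a constant multiplies its MGF by an exponential.
-/

open MeasureTheory ProbabilityTheory Real

theorem Real.neg_sub_sq_le_log_one_sub {x : ℝ} (hx : |x| ≤ 1 / 2) :
    -x - x ^ 2 ≤ log (1 - x) := by
  obtain ⟨hx₁, hx₂⟩ := abs_le.mp hx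
  have hpos : 0 < 1 - x := by linarith
  rcases le_total x 0 with hneg | hnonneg
  · calc -x - x ^ 2 ≤ 1 - (1 - x)⁻¹ := by
          rw [inv_eq_one_div, sub_div' hpos.ne', le_div_iff₀ hpos]
          nlinarith [pow_two_nonneg x]
      _ ≤ log (1 - x) := one_sub_inv_le_log_of_pos hpos
  · -- `exp u ≥ 1 + u + u²/2` with `u = x + x²` already beats `(1 - x)⁻¹` on `[0, 1/2]`.
    rw [le_log_iff_exp_le hpos, show -x - x ^ 2 = -(x + x ^ 2) by ring, exp_neg,
      inv_le_comm₀ (exp_pos _) hpos]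
    calc (1 - x)⁻¹ ≤ 1 + (x + x ^ 2) + (x + x ^ 2) ^ 2 / 2 := by
          rw [inv_le_iff_one_le_mul₀ hpos]
          nlinarith [mul_nonneg hnonneg hnonneg, mul_nonneg (mul_nonneg hnonneg hnonneg) hnonneg]
      _ ≤ exp (x + x ^ 2) := quadratic_le_exp_of_nonneg (by positivity)

theorem div_one_sub_two_mul_le {t : ℝ} (ht : t ≤ 1 / 4) : t / (1 - 2 * t) ≤ t + 4 * t ^ 2 := by
  have hpos : 0 < 1 - 2 * t := by linarith
  rw [div_le_iff₀ hpos]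
  nlinarith [sq_nonneg t]

theorem exp_neg_mul_noncentralChiSq_mgf_le {p a t : ℝ} (hp : 0 ≤ p) (ha : 0 ≤ a)
    (ht : |t| ≤ 1 / 4) :
    exp (-t * (p + a)) * exp (a * t / (1 - 2 * t)) / (1 - 2 * t) ^ (p / 2)
      ≤ exp (2 * (p + 2 * a) * t ^ 2) := by
  have hpos : 0 < 1 - 2 * t := by linarith [(abs_le.mp ht).2]
  have hlog : -(2 * t) - (2 * t) ^ 2 ≤ log (1 - 2 * t) :=
    neg_sub_sq_le_log_one_sub (by rw [abs_mul, abs_two]; linarith)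
  have hp_term := mul_le_mul_of_nonneg_left hlog hp
  have ha_term := mul_le_mul_of_nonneg_left (div_one_sub_two_mul_le (abs_le.mp ht).2) ha
  rw [rpow_def_of_pos hpos, ← exp_add, ← exp_sub, exp_le_exp, mul_div_assoc]
  linear_combination ha_term + hp_term / 2

theorem noncentral_chisq_subexponential_general {Ω : Type*} [MeasurableSpace Ω]
    (μ : Measure Ω) (p a : ℝ) (hp : 0 < p) (ha : 0 ≤ a)
    (X : Ω → ℝ)
    (hMGF : ∀ t : ℝ, t < 1 / 2 →
      ∫ ω, Real.exp (t * X ω) ∂μ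
        = Real.exp (a * t / (1 - 2 * t)) / (1 - 2 * t) ^ (p / 2)) :
    (∀ t : ℝ, |t| ≤ 1 / 4 →
      Real.exp (-t * (p + a)) * Real.exp (a * t / (1 - 2 * t)) / (1 - 2 * t) ^ (p / 2)
        ≤ Real.exp (2 * (p + 2 * a) * t ^ 2)) ∧
    (∀ t : ℝ, |t| ≤ 1 / 4 →
      ∫ ω, Real.exp (t * (X ω - (p + a))) ∂μ ≤ Real.exp (2 * (p + 2 * a) * t ^ 2)) := by
  have hbound t (ht : |t| ≤ 1 / 4) := exp_neg_mul_noncentralChiSq_mgf_le hp.le ha ht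
  refine ⟨hbound, fun t ht => ?_⟩
  have hshift : ∫ ω, exp (t * (X ω - (p + a))) ∂μ = exp (-t * (p + a)) * mgf X μ t := by
    calc ∫ ω, exp (t * (X ω - (p + a))) ∂μ = mgf (fun ω => X ω + -(p + a)) μ t := by
          simp_rw [sub_eq_add_neg]; rfl
      _ = exp (-t * (p + a)) * mgf X μ t := by rw [mgf_add_const]; ring_nf
  rw [hshift, mgf, hMGF t (by linarith [(abs_le.mp ht).2]), mul_div_assoc']
  exact hbound t ht

/-- the paper's Lemma 3. For `p > 0`, `a ≥ 0` and `|t| ≤ 1/4`,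
`exp(−t(p+a)) exp(a t/(1−2t))/(1−2t)^{p/2} ≤ exp(2(p+2a)t²)`. Consequently, a random
variable `X` whose MGF is `exp(a t/(1−2t))/(1−2t)^{p/2}` for `t < 1/2` (a non-central
chi-squared with `p` degrees of freedom and non-centrality `a`, with mean `p + a`)
satisfies `E[exp(t(X − (p+a)))] ≤ exp(2(p+2a)t²)` for all `|t| ≤ 1/4`. -/
theorem noncentral_chisq_subexponential {Ω : Type*} [MeasurableSpace Ω]
    (μ : Measure Ω) [IsProbabilityMeasure μ] (p a : ℝ) (hp : 0 < p) (ha : 0 ≤ a)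
    (X : Ω → ℝ)
    (hMGF : ∀ t : ℝ, t < 1 / 2 →
      ∫ ω, Real.exp (t * X ω) ∂μ
        = Real.exp (a * t / (1 - 2 * t)) / (1 - 2 * t) ^ (p / 2)) :
    (∀ t : ℝ, |t| ≤ 1 / 4 →
      Real.exp (-t * (p + a)) * Real.exp (a * t / (1 - 2 * t)) / (1 - 2 * t) ^ (p / 2)
        ≤ Real.exp (2 * (p + 2 * a) * t ^ 2)) ∧
    (∀ t : ℝ, |t| ≤ 1 / 4 →
      ∫ ω, Real.exp (t * (X ω - (p + a))) ∂μ ≤ Real.exp (2 * (p + 2 * a) * t ^ 2)) :=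
  noncentral_chisq_subexponential_general μ p a hp ha X hMGF
end

section
/- Define sinc(x) = sin(x)/x for x ≠ 0 and sinc(0) = 1, let H(β1, β2) = C·sinc(K_x·π·(α1 − β1))·sinc(K_y·π·(α2 − β2)) with C a nonzero complex constant, K_x, K_y > 0, α1, α2 real, and let μ(β1, β2) = P·|H(β1, β2)|² + σ² with P > 0 and σ² > 0. Let β1⁰, β2⁰, v be reals such that K_x·v is a positive integer, α1 − β1⁰ ≠ 0, α1 − β1⁰ − v ≠ 0, sin(K_x·π·(α1 − β1⁰)) ≠ 0, and sinc(K_y·π·(α2 − β2⁰)) ≠ 0. Then (μ(β1⁰, β2⁰) − σ²) / (μ(β1⁰ + v, β2⁰) − σ²) = ((α1 − β1⁰ − v)/(α1 − β1⁰))². -/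
/-
Shifting `β1` by `v` shifts the argument `x = Kₓπ(α1 − β1⁰)` of the first `sinc` factor by the
multiple `Kₓv·π` of `π`, which changes `sin x` only by a sign. Hence in the quotient of the two
received powers everything cancels except the denominators of the two `sinc` values, and their
ratio is `(x − Kₓvπ)/x = (α1 − β1⁰ − v)/(α1 − β1⁰)`.
-/

open Real

noncomputable def sinc (x : ℝ) : ℝ := if x = 0 then 1 else Real.sin x / x

theorem sinc_eq_real_sinc : _root_.sinc = Real.sinc := rfl

theorem sin_sub_int_mul_pi_sq (x : ℝ) (n : ℤ) : sin (x - n * π) ^ 2 = sin x ^ 2 := by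
  rw [sin_sub_int_mul_pi, mul_pow, ← sq_abs ((-1 : ℝ) ^ n), abs_neg_one_zpow, one_pow, one_mul]

theorem sinc_sq_div_sinc_sub_int_mul_pi_sq {x : ℝ} (hx : sin x ≠ 0) (n : ℤ) :
    Real.sinc x ^ 2 / Real.sinc (x - n * π) ^ 2 = ((x - n * π) / x) ^ 2 := by
  have hsin : sin (x - n * π) ^ 2 = sin x ^ 2 := sin_sub_int_mul_pi_sq x n
  have hx₀ : x ≠ 0 := fun h => hx (h ▸ sin_zero)
  have hy₀ : x - n * π ≠ 0 := fun h => hx (by simpa [h] using hsin.symm)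
  have hsin₀ : sin x ^ 2 ≠ 0 := pow_ne_zero 2 hx
  rw [sinc_of_ne_zero hx₀, sinc_of_ne_zero hy₀, div_pow, div_pow, hsin, div_pow]
  field_simp

theorem norm_mul_ofReal_mul_ofReal_sq (c : ℂ) (a b : ℝ) :
    ‖c * a * b‖ ^ 2 = ‖c‖ ^ 2 * a ^ 2 * b ^ 2 := by
  simp only [norm_mul, Complex.norm_real, Real.norm_eq_abs, mul_pow, sq_abs]

theorem ratio_identity_general (C : ℂ) (hC : C ≠ 0) (Kx Ky α1 α2 P σ2 : ℝ)
    (hKx : 0 < Kx) (hP : 0 < P)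
    (H : ℝ → ℝ → ℂ)
    (hH : ∀ β1 β2, H β1 β2 =
      C * (_root_.sinc (Kx * π * (α1 - β1)) : ℝ) * (_root_.sinc (Ky * π * (α2 - β2)) : ℝ))
    (μf : ℝ → ℝ → ℝ)
    (hμf : ∀ β1 β2, μf β1 β2 = P * ‖H β1 β2‖ ^ 2 + σ2)
    (β1₀ β2₀ v : ℝ)
    (hv : ∃ m : ℕ, 0 < m ∧ Kx * v = m)
    (h3 : Real.sin (Kx * π * (α1 - β1₀)) ≠ 0)
    (h4 : _root_.sinc (Ky * π * (α2 - β2₀)) ≠ 0) :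
    (μf β1₀ β2₀ - σ2) / (μf (β1₀ + v) β2₀ - σ2)
      = ((α1 - β1₀ - v) / (α1 - β1₀)) ^ 2 := by
  obtain ⟨m, -, hm⟩ := hv
  rw [sinc_eq_real_sinc] at hH h4
  have hpower : ∀ β1 β2, μf β1 β2 - σ2
      = P * ‖C‖ ^ 2 * Real.sinc (Kx * π * (α1 - β1)) ^ 2 * Real.sinc (Ky * π * (α2 - β2)) ^ 2 := by
    intro β1 β2
    rw [hμf, hH, norm_mul_ofReal_mul_ofReal_sq]
    ring
  have hshift : Kx * π * (α1 - (β1₀ + v)) = Kx * π * (α1 - β1₀) - (m : ℤ) * π := by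
    rw [Int.cast_natCast, ← hm]
    ring
  have hgain : P * ‖C‖ ^ 2 ≠ 0 := mul_ne_zero hP.ne' (pow_ne_zero 2 (norm_ne_zero_iff.mpr hC))
  have hKxπ : Kx * π ≠ 0 := mul_ne_zero hKx.ne' pi_ne_zero
  rw [hpower, hpower, mul_div_mul_right _ _ (pow_ne_zero 2 h4), mul_div_mul_left _ _ hgain,
    hshift, sinc_sq_div_sinc_sub_int_mul_pi_sq h3, ← hshift, mul_div_mul_left _ _ hKxπ]
  ring

/-- Eq. (14) in the proof of the paper's Theorem 1. With
`H(β1,β2) = C·sinc(Kₓπ(α1−β1))·sinc(K_yπ(α2−β2))` (`C ≠ 0`, `Kₓ, K_y > 0`) and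
`μ(β1,β2) = P|H(β1,β2)|² + σ²` (`P > 0`, `σ² > 0`), if `Kₓ·v` is a positive integer,
`α1 − β1⁰ ≠ 0`, `α1 − β1⁰ − v ≠ 0`, `sin(Kₓπ(α1 − β1⁰)) ≠ 0` and
`sinc(K_yπ(α2 − β2⁰)) ≠ 0`, then
`(μ(β1⁰,β2⁰) − σ²)/(μ(β1⁰+v,β2⁰) − σ²) = ((α1 − β1⁰ − v)/(α1 − β1⁰))²`. -/
theorem ratio_identity (C : ℂ) (hC : C ≠ 0) (Kx Ky α1 α2 P σ2 : ℝ)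
    (hKx : 0 < Kx) (hKy : 0 < Ky) (hP : 0 < P) (hσ2 : 0 < σ2)
    (H : ℝ → ℝ → ℂ)
    (hH : ∀ β1 β2, H β1 β2 =
      C * (_root_.sinc (Kx * π * (α1 - β1)) : ℝ) * (_root_.sinc (Ky * π * (α2 - β2)) : ℝ))
    (μf : ℝ → ℝ → ℝ)
    (hμf : ∀ β1 β2, μf β1 β2 = P * ‖H β1 β2‖ ^ 2 + σ2)
    (β1₀ β2₀ v : ℝ)
    (hv : ∃ m : ℕ, 0 < m ∧ Kx * v = m)
    (h1 : α1 - β1₀ ≠ 0) (h2 : α1 - β1₀ - v ≠ 0)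
    (h3 : Real.sin (Kx * π * (α1 - β1₀)) ≠ 0)
    (h4 : _root_.sinc (Ky * π * (α2 - β2₀)) ≠ 0) :
    (μf β1₀ β2₀ - σ2) / (μf (β1₀ + v) β2₀ - σ2)
      = ((α1 - β1₀ - v) / (α1 - β1₀)) ^ 2 :=
  ratio_identity_general C hC Kx Ky α1 α2 P σ2 hKx hP H hH μf hμf β1₀ β2₀ v hv h3 h4
end

section
/- Let v and c be real numbers with v ≠ 0, c ≠ 0, c ≠ v/2, and c ≠ −v/2. Set ρ = |(c − v)/c| and ρ' = |(c + v)/c|. Then the intersection of the two-element sets {v/(1 + ρ), v/(1 − ρ)} and {−v/(1 + ρ'), −v/(1 − ρ')} equals exactly {c}. In other words, c is the unique real number lying simultaneously among the two solutions of |(x − v)/x| = ρ and the two solutions of |(x + v)/x| = ρ'. -/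
/-! With `t = v / c` we have `ρ = |1 - t|` and `ρ' = |(-1) - t|`, and `{a + |a - t|, a - |a - t|}`
is always `{t, 2a - t}`, i.e. `t` together with its mirror image in `a`. Since `x ↦ v / x` is an
involution, the two candidate sets are the images of `{t, 2 - t}` and `{t, -2 - t}`; their mirror
points never coincide, so the only common point is the image of `t`, which is `v / (v / c) = c`. -/

lemma Set.pair_inter_pair_of_ne {α : Type*} {a b c : α} (h : b ≠ c) :
    ({a, b} : Set α) ∩ {a, c} = {a} := by
  rw [← Set.insert_inter_distrib, (Set.singleton_inter_eq_empty (s := {c})).mpr h, insert_empty_eq]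

lemma pair_add_abs_sub_sub_abs_sub (a t : ℝ) :
    ({a + |a - t|, a - |a - t|} : Set ℝ) = {t, 2 * a - t} := by
  rcases abs_cases (a - t) with ⟨h, -⟩ | ⟨h, -⟩
  · rw [h, Set.pair_comm]
    ring_nf
  · rw [h]
    ring_nf

theorem unique_common_solution_general (c v : ℝ) (hv : v ≠ 0) (hc : c ≠ 0) (ρ ρ' : ℝ)
    (hρ : ρ = |(c - v) / c|) (hρ' : ρ' = |(c + v) / c|) :
    ({v / (1 + ρ), v / (1 - ρ)} : Set ℝ) ∩ ({-v / (1 + ρ'), -v / (1 - ρ')} : Set ℝ)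
      = {c} := by
  set t := v / c
  have hρt : ρ = |1 - t| := by rw [hρ, sub_div, div_self hc]
  have hρt' : ρ' = |-1 - t| := by rw [hρ', add_div, div_self hc, ← abs_neg, neg_add']
  have hfirst : ({v / (1 + ρ), v / (1 - ρ)} : Set ℝ) = (v / ·) '' {t, 2 * 1 - t} := by
    rw [← pair_add_abs_sub_sub_abs_sub, Set.image_pair, hρt]
  have hsecond : ({-v / (1 + ρ'), -v / (1 - ρ')} : Set ℝ) = (v / ·) '' {t, 2 * -1 - t} := by
    rw [← pair_add_abs_sub_sub_abs_sub, Set.pair_comm, Set.image_pair, hρt', neg_div, neg_div,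
      ← div_neg, ← div_neg, neg_add', neg_sub', sub_neg_eq_add]
  have hinj : Function.Injective (v / · : ℝ → ℝ) :=
    Function.Involutive.injective fun _ ↦ div_div_cancel₀ hv
  rw [hfirst, hsecond, ← Set.image_inter hinj, Set.pair_inter_pair_of_ne (by norm_num),
    Set.image_singleton, div_div_cancel₀ hv]

/-- uniqueness claim behind Eq. (18) of the paper's Theorem 1.
For `v ≠ 0`, `c ∉ {0, v/2, −v/2}`, with `ρ = |(c − v)/c|` and `ρ' = |(c + v)/c|`,
the intersection of `{v/(1 + ρ), v/(1 − ρ)}` and `{−v/(1 + ρ'), −v/(1 − ρ')}` is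
exactly `{c}`. -/
theorem unique_common_solution (c v : ℝ) (hv : v ≠ 0) (hc : c ≠ 0)
    (hc1 : c ≠ v / 2) (hc2 : c ≠ -v / 2) (ρ ρ' : ℝ)
    (hρ : ρ = |(c - v) / c|) (hρ' : ρ' = |(c + v) / c|) :
    ({v / (1 + ρ), v / (1 - ρ)} : Set ℝ) ∩ ({-v / (1 + ρ'), -v / (1 - ρ')} : Set ℝ)
      = {c} :=
  unique_common_solution_general c v hv hc ρ ρ' hρ hρ'
end

section
/- Define sinc(x) = sin(x)/x for x ≠ 0 and sinc(0) = 1, let H(β1, β2) = C·sinc(K_x·π·(α1 − β1))·sinc(K_y·π·(α2 − β2)) with C a nonzero complex constant, K_x, K_y > 0, α1, α2 real, and let μ(β1, β2) = P·|H(β1, β2)|² + σ² with P > 0 and σ² > 0. Let β1⁰, β2⁰, v be reals such that K_x·v is a positive integer, α1 − β1⁰ ≠ 0, α1 − β1⁰ − v ≠ 0, sin(K_x·π·(α1 − β1⁰)) ≠ 0, and sinc(K_y·π·(α2 − β2⁰)) ≠ 0. Set r = √( (μ(β1⁰, β2⁰) − σ²) / (μ(β1⁰ + v, β2⁰) − σ²)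 ). Then (1 + r)·(α1 − β1⁰) = v or (1 − r)·(α1 − β1⁰) = v; i.e., α1 ∈ {β1⁰ + v/(1 + r), β1⁰ + v/(1 − r)}. -/
open Real

/-!
Shifting `β1` by `v` moves the argument `x = Kₓπ(α1 − β1⁰)` of the first sinc factor to
`x' = x − Kₓv·π`, an integer multiple of `π` away, which leaves `|sin|` unchanged. All other factors of the power
cancel in the ratio, so `r = |sinc x| / |sinc x'| = |x'| / |x| = |α1 − β1⁰ − v| / |α1 − β1⁰|`, and
the two sign choices of `α1 − β1⁰ − v = ± r (α1 − β1⁰)` are the two candidates.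
-/

lemma abs_sin_sub_nat_mul_pi (x : ℝ) (n : ℕ) : |sin (x - n * π)| = |sin x| := by
  rw [sin_sub_nat_mul_pi, abs_mul, abs_pow, abs_neg, abs_one, one_pow, one_mul]

lemma abs_sinc_div_abs_sinc {x y : ℝ} (hxy : |sin x| = |sin y|) (hx : sin x ≠ 0) :
    |_root_.sinc x| / |_root_.sinc y| = |y| / |x| := by
  have hx0 : x ≠ 0 := by rintro rfl; exact hx sin_zero
  have hy0 : y ≠ 0 := by rintro rfl; exact hx (abs_eq_zero.mp (by simpa using hxy))
  have hsinc_x : _root_.sinc x = sin x / x := Real.sinc_of_ne_zero hx0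
  have hsinc_y : _root_.sinc y = sin y / y := Real.sinc_of_ne_zero hy0
  have hsin_y : |sin y| ≠ 0 := hxy ▸ abs_ne_zero.mpr hx
  rw [hsinc_x, hsinc_y, abs_div, abs_div, hxy]
  field_simp

lemma sqrt_div_mul_norm_sq {𝕜 : Type*} [RCLike 𝕜] {C : 𝕜} (hC : C ≠ 0) {P : ℝ} (hP : P ≠ 0)
    {b : ℝ} (hb : b ≠ 0) (a a' : ℝ) :
    √((P * ‖C * a * b‖ ^ 2) / (P * ‖C * a' * b‖ ^ 2)) = |a| / |a'| := by
  have hCb : P * (‖C‖ * |b|) ^ 2 ≠ 0 := by positivity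
  simp only [norm_mul, RCLike.norm_ofReal]
  have hsplit (t : ℝ) : P * (‖C‖ * t * |b|) ^ 2 = P * (‖C‖ * |b|) ^ 2 * t ^ 2 := by ring
  rw [hsplit, hsplit, mul_div_mul_left _ _ hCb, ← div_pow, sqrt_sq (by positivity)]

lemma mul_sub_eq_of_mul_abs_eq_abs_sub {r d v : ℝ} (h : r * |d| = |d - v|) :
    (1 + r) * d = v ∨ (1 - r) * d = v := by
  rcases abs_cases d with ⟨hd, _⟩ | ⟨hd, _⟩ <;> rcases abs_cases (d - v) with ⟨hdv, _⟩ | ⟨hdv, _⟩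
  all_goals rw [hd, hdv] at h
  · right; linarith
  · left; linarith
  · left; linarith
  · right; linarith

theorem alpha1_two_candidates_general (C : ℂ) (hC : C ≠ 0) (Kx Ky α1 α2 P σ2 : ℝ)
    (hP : 0 < P)
    (H : ℝ → ℝ → ℂ)
    (hH : ∀ β1 β2, H β1 β2 =
      C * (_root_.sinc (Kx * π * (α1 - β1)) : ℝ) * (_root_.sinc (Ky * π * (α2 - β2)) : ℝ))
    (μf : ℝ → ℝ → ℝ)
    (hμf : ∀ β1 β2, μf β1 β2 = P * ‖H β1 β2‖ ^ 2 + σ2)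
    (β1₀ β2₀ v : ℝ)
    (hv : ∃ m : ℕ, 0 < m ∧ Kx * v = m)
    (h3 : Real.sin (Kx * π * (α1 - β1₀)) ≠ 0)
    (h4 : _root_.sinc (Ky * π * (α2 - β2₀)) ≠ 0)
    (r : ℝ) (hr : r = Real.sqrt ((μf β1₀ β2₀ - σ2) / (μf (β1₀ + v) β2₀ - σ2))) :
    (1 + r) * (α1 - β1₀) = v ∨ (1 - r) * (α1 - β1₀) = v := by
  obtain ⟨m, hm, hmv⟩ := hv
  have hKx : Kx ≠ 0 := by
    rintro rfl
    rw [zero_mul] at hmv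
    exact hm.ne (by exact_mod_cast hmv)
  have hd : α1 - β1₀ ≠ 0 := by rintro hd; simp [hd] at h3
  have hshift : Kx * π * (α1 - (β1₀ + v)) = Kx * π * (α1 - β1₀) - m * π := by
    rw [← hmv]; ring
  have hr_sinc : r = |_root_.sinc (Kx * π * (α1 - β1₀))| /
      |_root_.sinc (Kx * π * (α1 - (β1₀ + v)))| := by
    simp only [hr, hμf, hH, add_sub_cancel_right]
    exact sqrt_div_mul_norm_sq hC hP.ne' h4 _ _
  rw [abs_sinc_div_abs_sinc (by rw [hshift, abs_sin_sub_nat_mul_pi]) h3] at hr_sinc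
  apply mul_sub_eq_of_mul_abs_eq_abs_sub
  have hKπ : |Kx * π| ≠ 0 := by positivity
  rw [hr_sinc, abs_mul (Kx * π), abs_mul (Kx * π), show α1 - (β1₀ + v) = α1 - β1₀ - v by ring,
    mul_div_mul_left _ _ hKπ, div_mul_cancel₀ _ (abs_ne_zero.mpr hd)]

/-- Eq. (16) of the paper's Theorem 1. With
`H(β1,β2) = C·sinc(Kₓπ(α1−β1))·sinc(K_yπ(α2−β2))` (`C ≠ 0`, `Kₓ, K_y > 0`) and
`μ(β1,β2) = P|H(β1,β2)|² + σ²` (`P, σ² > 0`), if `Kₓ·v` is a positive integer,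
`α1 − β1⁰ ≠ 0`, `α1 − β1⁰ − v ≠ 0`, `sin(Kₓπ(α1 − β1⁰)) ≠ 0` and
`sinc(K_yπ(α2 − β2⁰)) ≠ 0`, then with
`r = √((μ(β1⁰,β2⁰) − σ²)/(μ(β1⁰+v,β2⁰) − σ²))` we have
`(1 + r)(α1 − β1⁰) = v` or `(1 − r)(α1 − β1⁰) = v`, i.e.
`α1 ∈ {β1⁰ + v/(1 + r), β1⁰ + v/(1 − r)}`. -/
theorem alpha1_two_candidates (C : ℂ) (hC : C ≠ 0) (Kx Ky α1 α2 P σ2 : ℝ)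
    (hKx : 0 < Kx) (hKy : 0 < Ky) (hP : 0 < P) (hσ2 : 0 < σ2)
    (H : ℝ → ℝ → ℂ)
    (hH : ∀ β1 β2, H β1 β2 =
      C * (_root_.sinc (Kx * π * (α1 - β1)) : ℝ) * (_root_.sinc (Ky * π * (α2 - β2)) : ℝ))
    (μf : ℝ → ℝ → ℝ)
    (hμf : ∀ β1 β2, μf β1 β2 = P * ‖H β1 β2‖ ^ 2 + σ2)
    (β1₀ β2₀ v : ℝ)
    (hv : ∃ m : ℕ, 0 < m ∧ Kx * v = m)
    (h1 : α1 - β1₀ ≠ 0) (h2 : α1 - β1₀ - v ≠ 0)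
    (h3 : Real.sin (Kx * π * (α1 - β1₀)) ≠ 0)
    (h4 : _root_.sinc (Ky * π * (α2 - β2₀)) ≠ 0)
    (r : ℝ) (hr : r = Real.sqrt ((μf β1₀ β2₀ - σ2) / (μf (β1₀ + v) β2₀ - σ2))) :
    (1 + r) * (α1 - β1₀) = v ∨ (1 - r) * (α1 - β1₀) = v :=
  alpha1_two_candidates_general C hC Kx Ky α1 α2 P σ2 hP H hH μf hμf β1₀ β2₀ v hv h3 h4 r hr
end
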